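/- Let B be the formal power series over ℚ with B = ∑_{n≥0} binom(2n,n) z^n. For every n ≥ 0, the coefficient of z^n in B³ equals (2n+1)·binom(2n,n). (This counts the vertices of toggle trees: (z·BC)′ = B³.) -/

import Mathlib

/-!
From `C = 1 + X C²` one gets `B = (X C)' = C + X C'` and `B (1 - 2 X C) = 1`, i.e. `B = 1/√(1 - 4X)`
and `1 - 2 X C = √(1 - 4X)`. Differentiating the inverse gives `B' = 2 B³`, so
`[Xⁿ] B³ = (n + 1) binom(2n+2, n+1) / 2 = (2n + 1) binom(2n, n)`; and differentiating
`2 X B C = B - 1` gives `(X B C)' = B³`.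
-/

open PowerSeries Finset

/-- The central binomial generating function `B = ∑ binom(2n,n) zⁿ` over `ℚ`. -/
noncomputable def Bgf : PowerSeries ℚ := PowerSeries.mk fun n => ((2 * n).choose n : ℚ)

/-- The Catalan generating function `C = ∑ Cₙ zⁿ` over `ℚ`. -/
noncomputable def Cgf : PowerSeries ℚ := PowerSeries.mk fun n => (catalan n : ℚ)

instance {R : Type*} [Semiring R] [CharZero R] : CharZero R⟦X⟧ :=
  charZero_of_injective_ringHom C_injective

lemma coeff_Bgf (n : ℕ) : coeff n Bgf = n.centralBinom := by
  simp [Bgf, Nat.centralBinom_eq_two_mul_choose]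

lemma Cgf_eq_one_add_X_mul_sq : Cgf = 1 + X * Cgf ^ 2 := by
  ext (_ | n)
  · simp [Cgf, coeff_zero_eq_constantCoeff]
  · rw [map_add, coeff_succ_X_mul]
    simp [Cgf, pow_two, coeff_mul, catalan_succ']

lemma Bgf_eq_derivative_X_mul_Cgf : Bgf = d⁄dX ℚ (X * Cgf) := by
  ext n
  rw [coeff_Bgf, coeff_derivative, coeff_succ_X_mul, ← succ_mul_catalan_eq_centralBinom]
  simp [Cgf, mul_comm]

lemma Bgf_eq_Cgf_add_X_mul_derivative : Bgf = Cgf + X * d⁄dX ℚ Cgf := by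
  rw [Bgf_eq_derivative_X_mul_Cgf, Derivation.leibniz, derivative_X, smul_eq_mul, smul_eq_mul]
  ring

lemma derivative_Cgf : d⁄dX ℚ Cgf = Cgf ^ 2 + 2 * X * Cgf * d⁄dX ℚ Cgf := by
  nth_rewrite 1 [Cgf_eq_one_add_X_mul_sq]
  rw [map_add, Derivation.map_one_eq_zero, Derivation.leibniz, Derivation.leibniz_pow,
    derivative_X]
  simp only [smul_eq_mul]
  ring

lemma Bgf_mul_one_sub_two_mul_X_mul_Cgf : Bgf * (1 - 2 * X * Cgf) = 1 := by
  linear_combination Cgf_eq_one_add_X_mul_sq + X * derivative_Cgf +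
    (1 - 2 * X * Cgf) * Bgf_eq_Cgf_add_X_mul_derivative

lemma derivative_Bgf : d⁄dX ℚ Bgf = 2 * Bgf ^ 3 := by
  have h : d⁄dX ℚ (1 - 2 * X * Cgf) = -(2 * Bgf) := by
    rw [Bgf_eq_derivative_X_mul_Cgf, mul_assoc, two_mul, two_mul, map_sub, map_add,
      Derivation.map_one_eq_zero, zero_sub, neg_add]
  rw [Derivation.leibniz_of_mul_eq_one _ Bgf_mul_one_sub_two_mul_X_mul_Cgf, h, smul_eq_mul]
  ring

lemma coeff_Bgf_pow_three (n : ℕ) :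
    coeff n (Bgf ^ 3) = ((2 * n + 1 : ℕ) : ℚ) * ((2 * n).choose n : ℚ) := by
  have h := congrArg (coeff n) derivative_Bgf
  rw [coeff_derivative, coeff_Bgf, ← Nat.cast_succ, ← Nat.cast_mul, mul_comm,
    Nat.succ_mul_centralBinom_succ, two_mul (Bgf ^ 3), map_add] at h
  rw [← Nat.centralBinom_eq_two_mul_choose]
  push_cast at h ⊢
  linear_combination -h / 2

lemma derivative_X_mul_Bgf_mul_Cgf : d⁄dX ℚ (X * (Bgf * Cgf)) = Bgf ^ 3 := by
  have h : 2 * (X * (Bgf * Cgf)) = Bgf - 1 := by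
    linear_combination -Bgf_mul_one_sub_two_mul_X_mul_Cgf
  have h' := congrArg (d⁄dX ℚ) h
  rw [two_mul, map_add, ← two_mul, map_sub, Derivation.map_one_eq_zero, sub_zero,
    derivative_Bgf] at h'
  exact mul_left_cancel₀ two_ne_zero h'

/-- `[zⁿ] B³ = (2n+1)·binom(2n,n)`; this counts the vertices of toggle trees,
since `(z·BC)′ = B³`. -/
theorem stmt5 :
    (∀ n : ℕ, PowerSeries.coeff n (Bgf ^ 3) =
      ((2 * n + 1 : ℕ) : ℚ) * ((2 * n).choose n : ℚ)) ∧
    d⁄dX ℚ (PowerSeries.X * (Bgf * Cgf)) = Bgf ^ 3 :=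
  ⟨coeff_Bgf_pow_three, derivative_X_mul_Bgf_mul_Cgf⟩
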